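/- arXiv:2103.02366 — 3 statements merged into one kernel-verified Lean document; each statement's English description precedes it below -/
import Mathlib

section
/- If a mixed graph G admits a perfect numbering of its vertices, then it admits a perfect numbering in which every discrete vertex precedes every continuous vertex; that is, there is an enumeration v_1, …, v_m of V that is a perfect numbering and an index t such that {v_1, …, v_t} = Δ and {v_{t+1}, …, v_m} = Γ. -/
open Finset

/-- The set `B(v_j) = ({v_j} ∪ N(v_j)) ∩ {v_1, …, v_j}` associated with an
enumeration `v` of the vertices of a graph `G`. -/
def numBset {V : Type*} [Fintype V] [DecidableEq V] (G : SimpleGraph V)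
    [DecidableRel G.Adj] {m : ℕ} (v : Fin m → V) (j : Fin m) : Finset V :=
  (insert (v j) (G.neighborFinset (v j))) ∩ ((Finset.Iic j).image v)

/-- The separator `S_j = B(v_j) ∩ {v_1, …, v_{j-1}}`, i.e. the parents of `v_j`. -/
def numSset {V : Type*} [Fintype V] [DecidableEq V] (G : SimpleGraph V)
    [DecidableRel G.Adj] {m : ℕ} (v : Fin m → V) (j : Fin m) : Finset V :=
  numBset G v j ∩ ((Finset.Iio j).image v)

/-- An enumeration `v : Fin m → V` of the vertices of a mixed graph `G`
(with `Δ` the set of discrete vertices, its complement being the continuous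
vertices) is a perfect numbering if it is a bijection and for every `j > 1`:
(a) there is `i < j` with `S_j ⊆ B(v_i)`; (b) `S_j` is complete in `G`;
(c) `R_j = {v_j} ⊆ Γ` or `S_j ⊆ Δ`. -/
structure IsPerfectNumbering {V : Type*} [Fintype V] [DecidableEq V]
    (G : SimpleGraph V) [DecidableRel G.Adj] (Δ : Set V) {m : ℕ}
    (v : Fin m → V) : Prop where
  bijective : Function.Bijective v
  exists_prev : ∀ j : Fin m, 0 < (j : ℕ) →
    ∃ i : Fin m, i < j ∧ numSset G v j ⊆ numBset G v i
  sep_complete : ∀ j : Fin m, 0 < (j : ℕ) → ∀ u w : V,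
    u ∈ numSset G v j → w ∈ numSset G v j → u ≠ w → G.Adj u w
  mixed : ∀ j : Fin m, 0 < (j : ℕ) → v j ∉ Δ ∨ ↑(numSset G v j) ⊆ Δ

/-!
Stably sort the numbering so that the discrete vertices come first. By (c), no continuous
vertex is a parent of a discrete one, so the sort never reverses a pair of neighbours; hence
each separator `S_j` is the separator of the same vertex in the old numbering, and (b) and (c)
carry over. Condition (a) needs no transport: for any numbering it follows from (b), since a
complete separator lies in `B(v_i)` for its last vertex `v_i`.
-/

section DiscreteFirst

variable {V : Type*} {m : ℕ}

/-- `Tuple.sort` is stable, so this keeps the original order within `Δ` and within its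
complement. -/
def discreteFirst (Δ : Set V) [DecidablePred (· ∈ Δ)] (v : Fin m → V) : Equiv.Perm (Fin m) :=
  Tuple.sort fun i => decide (v i ∉ Δ)

lemma exists_forall_discreteFirst_mem_iff (Δ : Set V) [DecidablePred (· ∈ Δ)]
    (v : Fin m → V) :
    ∃ t ≤ m, ∀ j : Fin m, v (discreteFirst Δ v j) ∈ Δ ↔ (j : ℕ) < t := by
  set c : Fin m → Bool := fun i => decide (v i ∉ Δ)
  refine ⟨#{j | (c ∘ Tuple.sort c) j ≤ false}, (card_le_univ _).trans_eq (Fintype.card_fin m),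
    fun j => ?_⟩
  rw [Tuple.lt_card_le_iff_apply_le_of_monotone (Tuple.monotone_sort c)]
  simp [c, discreteFirst, Bool.le_iff_imp]

end DiscreteFirst

section PerfectNumbering

variable {V : Type*} [Fintype V] [DecidableEq V] {G : SimpleGraph V} [DecidableRel G.Adj]
  {Δ : Set V} {m : ℕ} {v : Fin m → V}

lemma numSset_subset_image (j : Fin m) : numSset G v j ⊆ (Iio j).image v :=
  inter_subset_right

lemma apply_mem_numSset_iff (hv : Function.Injective v) {i j : Fin m} :
    v i ∈ numSset G v j ↔ i < j ∧ G.Adj (v j) (v i) := by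
  simp only [numSset, numBset, mem_inter, mem_insert, mem_image, mem_Iio, mem_Iic,
    SimpleGraph.mem_neighborFinset, hv.eq_iff, exists_eq_right]
  constructor
  · rintro ⟨⟨rfl | hadj, -⟩, hij⟩
    · exact absurd hij (lt_irrefl i)
    · exact ⟨hij, hadj⟩
  · rintro ⟨hij, hadj⟩
    exact ⟨⟨Or.inr hadj, hij.le⟩, hij⟩

lemma numBset_eq_insert_numSset (hv : Function.Injective v) (j : Fin m) :
    numBset G v j = insert (v j) (numSset G v j) := by
  ext z
  constructor
  · intro hz
    obtain ⟨i, hij, rfl⟩ := mem_image.mp (mem_inter.mp hz).2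
    rcases (mem_Iic.mp hij).lt_or_eq with hij | rfl
    · refine mem_insert_of_mem ((apply_mem_numSset_iff hv).mpr ⟨hij, ?_⟩)
      simpa [numBset, hv.eq_iff, hij.ne] using (mem_inter.mp hz).1
    · exact mem_insert_self _ _
  · rw [mem_insert]
    rintro (rfl | hz)
    · exact mem_inter.mpr ⟨mem_insert_self _ _, mem_image_of_mem v (mem_Iic.mpr le_rfl)⟩
    · exact (mem_inter.mp hz).1

lemma numSset_eq_empty_of_val_eq_zero {j : Fin m} (hj : (j : ℕ) = 0) :
    numSset G v j = ∅ := by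
  have : Iio j = ∅ := by
    ext i
    simp [Fin.lt_def, hj]
  simp [numSset, this]

lemma exists_lt_numSset_subset_numBset (hv : Function.Injective v) {j : Fin m}
    (hj : 0 < (j : ℕ)) (hS : G.IsClique (numSset G v j : Set V)) :
    ∃ i < j, numSset G v j ⊆ numBset G v i := by
  set I := (Iio j).filter (fun i => v i ∈ numSset G v j)
  rcases I.eq_empty_or_nonempty with hI | hI
  · refine ⟨⟨0, by omega⟩, Fin.lt_def.mpr hj, fun z hz => ?_⟩
    obtain ⟨k, hk, rfl⟩ := mem_image.mp (numSset_subset_image j hz)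
    exact absurd (mem_filter.mpr ⟨hk, hz⟩) (hI ▸ notMem_empty k)
  · set i := I.max' hI
    obtain ⟨hij, hiS⟩ := mem_filter.mp (I.max'_mem hI)
    refine ⟨i, mem_Iio.mp hij, fun z hz => ?_⟩
    obtain ⟨k, hk, rfl⟩ := mem_image.mp (numSset_subset_image j hz)
    rw [numBset_eq_insert_numSset hv]
    rcases (I.le_max' k (mem_filter.mpr ⟨hk, hz⟩)).lt_or_eq with hki | hki
    · exact mem_insert_of_mem ((apply_mem_numSset_iff hv).mpr
        ⟨hki, hS hiS hz (hv.ne hki.ne')⟩)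
    · exact hki ▸ mem_insert_self _ _

lemma IsPerfectNumbering.of_isClique (hv : Function.Bijective v)
    (hclique : ∀ j, G.IsClique (numSset G v j : Set V))
    (hmixed : ∀ j, v j ∉ Δ ∨ ↑(numSset G v j) ⊆ Δ) : IsPerfectNumbering G Δ v where
  bijective := hv
  exists_prev j hj := exists_lt_numSset_subset_numBset hv.injective hj (hclique j)
  sep_complete j _ _ _ hu hw huw := hclique j hu hw huw
  mixed j _ := hmixed j

lemma numSset_comp_perm (hv : Function.Injective v) {σ : Equiv.Perm (Fin m)}
    (hσ : ∀ a b, a < b → G.Adj (v (σ a)) (v (σ b)) → σ a < σ b) (j : Fin m) :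
    numSset G (v ∘ σ) j = numSset G v (σ j) := by
  have hvσ : Function.Injective (v ∘ σ) := hv.comp σ.injective
  have hlt_iff : ∀ i, G.Adj (v (σ j)) (v (σ i)) → (i < j ↔ σ i < σ j) := by
    intro i hadj
    refine ⟨fun hij => hσ i j hij hadj.symm, fun hσij => ?_⟩
    rcases lt_trichotomy i j with hij | rfl | hji
    · exact hij
    · exact absurd hσij (lt_irrefl _)
    · exact absurd (hσ j i hji hadj) hσij.asymm
  ext z
  by_cases hz : ∃ i, v (σ i) = z
  · obtain ⟨i, rfl⟩ := hz
    exact (apply_mem_numSset_iff hvσ).trans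
      ((and_congr_left (hlt_iff i)).trans (apply_mem_numSset_iff hv).symm)
  · push Not at hz
    constructor <;> intro hmem
    · obtain ⟨i, -, rfl⟩ := mem_image.mp (numSset_subset_image j hmem)
      exact absurd rfl (hz i)
    · obtain ⟨k, -, rfl⟩ := mem_image.mp (numSset_subset_image (σ j) hmem)
      exact absurd (by simp) (hz (σ.symm k))

namespace IsPerfectNumbering

variable (hv : IsPerfectNumbering G Δ v)
include hv

lemma isClique_numSset (j : Fin m) : G.IsClique (numSset G v j : Set V) := by
  rcases Nat.eq_zero_or_pos j with hj | hj
  · simp [numSset_eq_empty_of_val_eq_zero hj]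
  · exact fun _ hu _ hw huw => hv.sep_complete j hj _ _ hu hw huw

lemma notMem_or_numSset_subset (j : Fin m) : v j ∉ Δ ∨ ↑(numSset G v j) ⊆ Δ := by
  rcases Nat.eq_zero_or_pos j with hj | hj
  · simp [numSset_eq_empty_of_val_eq_zero hj]
  · exact hv.mixed j hj

lemma mem_of_adj_of_lt {i k : Fin m} (hik : i < k) (hadj : G.Adj (v k) (v i))
    (hk : v k ∈ Δ) : v i ∈ Δ :=
  (hv.notMem_or_numSset_subset k).resolve_left (not_not.mpr hk)
    ((apply_mem_numSset_iff hv.bijective.injective).mpr ⟨hik, hadj⟩)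

lemma comp_perm {σ : Equiv.Perm (Fin m)}
    (hσ : ∀ a b, a < b → G.Adj (v (σ a)) (v (σ b)) → σ a < σ b) :
    IsPerfectNumbering G Δ (v ∘ σ) := by
  have hS := numSset_comp_perm hv.bijective.injective hσ
  refine of_isClique (hv.bijective.comp σ.bijective) (fun j => ?_) (fun j => ?_)
  · rw [hS]
    exact hv.isClique_numSset (σ j)
  · rw [hS]
    exact hv.notMem_or_numSset_subset (σ j)

lemma discreteFirst_lt_of_adj [DecidablePred (· ∈ Δ)] {a b : Fin m} (hab : a < b)
    (hadj : G.Adj (v (discreteFirst Δ v a)) (v (discreteFirst Δ v b))) :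
    discreteFirst Δ v a < discreteFirst Δ v b := by
  set σ := discreteFirst Δ v
  obtain ⟨hmono, hstable⟩ := Tuple.eq_sort_iff.mp (rfl : σ = σ)
  by_contra hba
  have hba : σ b < σ a := (not_lt.mp hba).lt_of_ne (σ.injective.ne hab.ne')
  rcases (hmono hab.le).lt_or_eq with hlt | heq
  · obtain ⟨ha, hb⟩ := Bool.lt_iff.mp hlt
    simp only [Function.comp_apply, decide_eq_false_iff_not, not_not,
      decide_eq_true_eq] at ha hb
    exact hb (hv.mem_of_adj_of_lt hba hadj ha)
  · exact hba.asymm (hstable a b hab heq)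

end IsPerfectNumbering

end PerfectNumbering

/-- If a mixed graph admits a perfect numbering, then it admits a perfect
numbering in which the discrete vertices precede the continuous ones. -/
theorem exists_perfectNumbering_discrete_first
    {V : Type*} [Fintype V] [DecidableEq V] (G : SimpleGraph V)
    [DecidableRel G.Adj] (Δ : Set V) {m : ℕ} (v : Fin m → V)
    (hv : IsPerfectNumbering G Δ v) :
    ∃ w : Fin m → V, IsPerfectNumbering G Δ w ∧
      ∃ t : ℕ, t ≤ m ∧ ∀ j : Fin m, w j ∈ Δ ↔ (j : ℕ) < t := by
  classical
  exact ⟨v ∘ discreteFirst Δ v, hv.comp_perm fun _ _ => hv.discreteFirst_lt_of_adj,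
    exists_forall_discreteFirst_mem_iff Δ v⟩
end

section
/- Let v_1, …, v_m be a perfect numbering of a mixed graph G and let 1 ≤ k < m be such that v_k ∈ Γ (continuous) and v_{k+1} ∈ Δ (discrete). Then v_k and v_{k+1} are non-adjacent in G, the enumeration obtained from v_1, …, v_m by transposing v_k and v_{k+1} leaves the set B(v) unchanged for every vertex v, and this transposed enumeration is again a perfect numbering of G. -/
/-!
Transposing the adjacent positions `k < k + 1` changes the relative order of exactly one pair of
indices, so `B(v_j)` can change only if `v_k` and `v_{k+1}` are neighbours. They are not: otherwise
the continuous `v_k` would be a parent of the discrete `v_{k+1}`, violating condition (c). Hence all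
the sets `B` and `S` are merely relabelled, and conditions (b), (c) carry over. For (a) the only
delicate case is `S_{k+1} ⊆ B(v_k)`: since `v_k ∉ S_{k+1}` this gives `S_{k+1} ⊆ S_k`, and the
witness for `S_k` serves for `S_{k+1}` in its new position `k`.
-/

open Finset

lemma Equiv.swap_lt_swap_iff_of_val_eq_succ {m : ℕ} {k k' a b : Fin m}
    (hk : (k' : ℕ) = k + 1) (hab : ¬(a = k ∧ b = k')) (hba : ¬(a = k' ∧ b = k)) :
    Equiv.swap k k' a < Equiv.swap k k' b ↔ a < b := by
  simp only [Equiv.swap_apply_def, Fin.lt_def]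
  split_ifs <;> simp only [Fin.ext_iff, not_and] at * <;> omega

lemma Equiv.swap_le_swap_iff_of_val_eq_succ {m : ℕ} {k k' a b : Fin m}
    (hk : (k' : ℕ) = k + 1) (hab : ¬(a = k ∧ b = k')) (hba : ¬(a = k' ∧ b = k)) :
    Equiv.swap k k' a ≤ Equiv.swap k k' b ↔ a ≤ b :=
  le_iff_le_iff_lt_iff_lt.mpr
    (Equiv.swap_lt_swap_iff_of_val_eq_succ hk (fun h => hba h.symm) (fun h => hab h.symm))

section Numbering

variable {V : Type*} [Fintype V] [DecidableEq V] {G : SimpleGraph V} [DecidableRel G.Adj]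
  {m : ℕ} {v : Fin m → V}

lemma numSset_eq_erase (hv : Function.Injective v) (j : Fin m) :
    numSset G v j = (numBset G v j).erase (v j) := by
  ext x
  simp only [numSset, numBset, mem_erase, mem_inter, mem_image, mem_Iic, mem_Iio]
  constructor
  · rintro ⟨⟨hx, -⟩, i, hij, rfl⟩
    exact ⟨fun h => hij.ne (hv h), hx, i, hij.le, rfl⟩
  · rintro ⟨hne, hx, i, hij, rfl⟩
    exact ⟨⟨hx, i, hij, rfl⟩, i, hij.lt_of_ne (by rintro rfl; exact hne rfl), rfl⟩

lemma pos_of_mem_numSset {x : V} {j : Fin m} (hx : x ∈ numSset G v j) : 0 < (j : ℕ) := by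
  simp only [numSset, mem_inter, mem_image, mem_Iio] at hx
  obtain ⟨-, i, hij, -⟩ := hx
  exact lt_of_le_of_lt (Nat.zero_le _) hij

lemma mem_numSset_of_lt {i j : Fin m} (hij : i < j) (hadj : G.Adj (v j) (v i)) :
    v i ∈ numSset G v j := by
  simp only [numSset, numBset, mem_inter, mem_insert, SimpleGraph.mem_neighborFinset,
    mem_image, mem_Iic, mem_Iio]
  exact ⟨⟨Or.inr hadj, i, hij.le, rfl⟩, i, hij, rfl⟩

lemma adj_of_mem_numSset (hv : Function.Injective v) {x : V} {j : Fin m}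
    (hx : x ∈ numSset G v j) : G.Adj (v j) x := by
  rw [numSset_eq_erase hv] at hx
  simp only [numBset, mem_erase, mem_inter, mem_insert, SimpleGraph.mem_neighborFinset] at hx
  exact hx.2.1.resolve_left hx.1

lemma numSset_subset_numSset_of_subset_numBset (hv : Function.Injective v) {i j : Fin m}
    (hsub : numSset G v j ⊆ numBset G v i) (hi : v i ∉ numSset G v j) :
    numSset G v j ⊆ numSset G v i := by
  intro x hx
  rw [numSset_eq_erase hv]
  exact mem_erase.mpr ⟨by rintro rfl; exact hi hx, hsub hx⟩

lemma numBset_comp_perm (σ : Equiv.Perm (Fin m)) (j : Fin m)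
    (hσ : ∀ l, v (σ l) ∈ insert (v (σ j)) (G.neighborFinset (v (σ j))) → (σ l ≤ σ j ↔ l ≤ j)) :
    numBset G (v ∘ σ) j = numBset G v (σ j) := by
  ext x
  simp only [numBset, Function.comp_apply, mem_inter, mem_image, mem_Iic]
  constructor
  · rintro ⟨hx, l, hl, rfl⟩
    exact ⟨hx, σ l, (hσ l hx).mpr hl, rfl⟩
  · rintro ⟨hx, l, hl, rfl⟩
    have hx' : v (σ (σ.symm l)) ∈ insert (v (σ j)) (G.neighborFinset (v (σ j))) := by
      rwa [Equiv.apply_symm_apply]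
    refine ⟨hx, σ.symm l, (hσ _ hx').mp ?_, by simp⟩
    rwa [Equiv.apply_symm_apply]

variable {k k' : Fin m}

lemma numBset_comp_swap (hv : Function.Injective v) (hk : (k' : ℕ) = k + 1)
    (hnadj : ¬ G.Adj (v k) (v k')) (j : Fin m) :
    numBset G (v ∘ Equiv.swap k k') j = numBset G v (Equiv.swap k k' j) := by
  have hvne : v k ≠ v k' := fun h => (Fin.lt_def.mpr (by omega) : k < k').ne (hv h)
  refine numBset_comp_perm _ j fun l hl => Equiv.swap_le_swap_iff_of_val_eq_succ hk ?_ ?_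
  all_goals
    rintro ⟨rfl, rfl⟩
    simp only [Equiv.swap_apply_left, Equiv.swap_apply_right, mem_insert,
      SimpleGraph.mem_neighborFinset] at hl
    rcases hl with h | h
  exacts [hvne h.symm, hnadj h, hvne h, hnadj h.symm]

lemma numSset_comp_swap (hv : Function.Injective v) (hk : (k' : ℕ) = k + 1)
    (hnadj : ¬ G.Adj (v k) (v k')) (j : Fin m) :
    numSset G (v ∘ Equiv.swap k k') j = numSset G v (Equiv.swap k k' j) := by
  rw [numSset_eq_erase (hv.comp (Equiv.injective _)), numSset_eq_erase hv,
    numBset_comp_swap hv hk hnadj, Function.comp_apply]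

namespace IsPerfectNumbering

variable {Δ : Set V}

lemma not_adj_of_lt (hv : IsPerfectNumbering G Δ v) {i j : Fin m} (hij : i < j)
    (hi : v i ∉ Δ) (hj : v j ∈ Δ) : ¬ G.Adj (v i) (v j) := by
  intro hadj
  have hmem := mem_numSset_of_lt hij hadj.symm
  rcases hv.mixed j (pos_of_mem_numSset hmem) with hj' | hS
  · exact hj' hj
  · exact hi (hS hmem)

lemma exists_prev_comp_swap (hv : IsPerfectNumbering G Δ v) (hk : (k' : ℕ) = k + 1)
    (hnadj : ¬ G.Adj (v k) (v k')) (j : Fin m) (hj : 0 < (j : ℕ)) :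
    ∃ i < j, numSset G (v ∘ Equiv.swap k k') j ⊆ numBset G (v ∘ Equiv.swap k k') i := by
  have hinj := hv.bijective.injective
  simp only [numSset_comp_swap hinj hk hnadj, numBset_comp_swap hinj hk hnadj]
  have hkk' : k < k' := Fin.lt_def.mpr (by omega)
  rcases Nat.eq_zero_or_pos (Equiv.swap k k' j : ℕ) with hσj | hσj
  · refine ⟨⟨0, by omega⟩, Fin.lt_def.mpr hj, fun x hx => ?_⟩
    exact absurd (pos_of_mem_numSset hx) (by omega)
  obtain ⟨i, hij, hsub⟩ := hv.exists_prev _ hσj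
  by_cases hbad : i = k ∧ Equiv.swap k k' j = k'
  · -- `j = k` and the witness of `S_{k+1}` is `k` itself; pass to the witness of `S_k`.
    obtain ⟨rfl, hσj'⟩ := hbad
    have hjk : j = i := by simpa [hσj'] using (Equiv.swap_apply_self i k' j).symm
    rw [hσj'] at hsub
    rw [hσj', hjk]
    have hnotmem : v i ∉ numSset G v k' := fun h => hnadj (adj_of_mem_numSset hinj h).symm
    have hSS := numSset_subset_numSset_of_subset_numBset hinj hsub hnotmem
    obtain ⟨i₀, hi₀, hsub₀⟩ := hv.exists_prev i (hjk ▸ hj)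
    refine ⟨i₀, hi₀, ?_⟩
    rw [Equiv.swap_apply_of_ne_of_ne hi₀.ne (hi₀.trans hkk').ne]
    exact hSS.trans hsub₀
  · refine ⟨Equiv.swap k k' i, ?_, by rwa [Equiv.swap_apply_self]⟩
    have hlt := (Equiv.swap_lt_swap_iff_of_val_eq_succ hk hbad fun h => by
      rw [h.1, h.2] at hij; exact hij.not_gt hkk').mpr hij
    rwa [Equiv.swap_apply_self] at hlt

theorem comp_swap (hv : IsPerfectNumbering G Δ v) (hk : (k' : ℕ) = k + 1)
    (hnadj : ¬ G.Adj (v k) (v k')) : IsPerfectNumbering G Δ (v ∘ Equiv.swap k k') where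
  bijective := hv.bijective.comp (Equiv.bijective _)
  exists_prev := hv.exists_prev_comp_swap hk hnadj
  sep_complete j _ u w hu hw := by
    rw [numSset_comp_swap hv.bijective.injective hk hnadj] at hu hw
    exact hv.sep_complete _ (pos_of_mem_numSset hu) u w hu hw
  mixed j _ := by
    rw [numSset_comp_swap hv.bijective.injective hk hnadj]
    rcases Nat.eq_zero_or_pos (Equiv.swap k k' j : ℕ) with h0 | hpos
    · exact Or.inr fun x hx => absurd (pos_of_mem_numSset hx) (by omega)
    · exact hv.mixed _ hpos

end IsPerfectNumbering

end Numbering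

/-- If, in a perfect numbering of a mixed graph, a continuous vertex `v_k` is
immediately followed by a discrete vertex `v_{k+1}`, then the two vertices are
non-adjacent, transposing them leaves all the sets `B(·)` unchanged, and the
transposed enumeration is again a perfect numbering. -/
theorem isPerfectNumbering_swap
    {V : Type*} [Fintype V] [DecidableEq V] (G : SimpleGraph V)
    [DecidableRel G.Adj] (Δ : Set V) {m : ℕ} (v : Fin m → V)
    (hv : IsPerfectNumbering G Δ v)
    (k : Fin m) (hk : (k : ℕ) + 1 < m)
    (hcont : v k ∉ Δ) (hdisc : v ⟨(k : ℕ) + 1, hk⟩ ∈ Δ) :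
    ¬ G.Adj (v k) (v ⟨(k : ℕ) + 1, hk⟩) ∧
    (∀ i : Fin m,
      numBset G (v ∘ Equiv.swap k ⟨(k : ℕ) + 1, hk⟩)
        (Equiv.swap k ⟨(k : ℕ) + 1, hk⟩ i) = numBset G v i) ∧
    IsPerfectNumbering G Δ (v ∘ Equiv.swap k ⟨(k : ℕ) + 1, hk⟩) := by
  have hnadj := hv.not_adj_of_lt (Fin.lt_def.mpr (Nat.lt_succ_self _)) hcont hdisc
  refine ⟨hnadj, fun i => ?_, hv.comp_swap rfl hnadj⟩
  rw [numBset_comp_swap hv.bijective.injective rfl hnadj, Equiv.swap_apply_self]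
end

section
/- Assume the p×p matrix S_{a,a} is invertible. Then the infimum over all α : I → ℝ and β ∈ ℝ^p of SSE(α, β) equals S_{j,j} − S_{j,a} S_{a,a}⁻¹ S_{a,j}, and this infimum is attained exactly at β̂ = S_{a,a}⁻¹ S_{a,j} and α̂(i) = ȳ_j(i) − β̂ᵀ ȳ_a(i) for all i ∈ I. -/
open Matrix

noncomputable section

/-- The cell mean `ȳ_j(i)` of the responses in cell `i`. -/
def cellMeanR {I : Type*} (η : I → Type*) [∀ i, Fintype (η i)]
    (yj : ∀ i, η i → ℝ) (i : I) : ℝ :=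
  (∑ k, yj i k) / (Fintype.card (η i) : ℝ)

/-- The cell mean `ȳ_a(i)` of the covariate vectors in cell `i`. -/
def cellMeanV {I : Type*} {p : ℕ} (η : I → Type*) [∀ i, Fintype (η i)]
    (ya : ∀ i, η i → Fin p → ℝ) (i : I) : Fin p → ℝ :=
  ((Fintype.card (η i) : ℝ))⁻¹ • ∑ k, ya i k

/-- The centred response `γ_j^k(i) = y_j^k(i) − ȳ_j(i)`. -/
def ctrR {I : Type*} (η : I → Type*) [∀ i, Fintype (η i)]
    (yj : ∀ i, η i → ℝ) (i : I) (k : η i) : ℝ :=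
  yj i k - cellMeanR η yj i

/-- The centred covariate vector `γ_a^k(i) = y_a^k(i) − ȳ_a(i)`. -/
def ctrV {I : Type*} {p : ℕ} (η : I → Type*) [∀ i, Fintype (η i)]
    (ya : ∀ i, η i → Fin p → ℝ) (i : I) (k : η i) : Fin p → ℝ :=
  ya i k - cellMeanV η ya i

/-- The sum of squared errors
`SSE(α, β) = Σ_i Σ_{k∈η(i)} (y_j^k(i) − α(i) − βᵀ y_a^k(i))²`. -/
def SSE {I : Type*} {p : ℕ} [Fintype I] (η : I → Type*) [∀ i, Fintype (η i)]
    (yj : ∀ i, η i → ℝ) (ya : ∀ i, η i → Fin p → ℝ)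
    (α : I → ℝ) (β : Fin p → ℝ) : ℝ :=
  ∑ i, ∑ k, (yj i k - α i - β ⬝ᵥ ya i k) ^ 2

end

noncomputable section
open Matrix

/-- The centred Gram matrix `S_{a,a} = Σ_i Σ_k γ_a^k(i) γ_a^k(i)ᵀ`. -/
def Saa {I : Type*} {p : ℕ} [Fintype I] (η : I → Type*) [∀ i, Fintype (η i)]
    (ya : ∀ i, η i → Fin p → ℝ) : Matrix (Fin p) (Fin p) ℝ :=
  ∑ i, ∑ k, vecMulVec (ctrV η ya i k) (ctrV η ya i k)

/-- The centred cross-moment vector `S_{a,j} = Σ_i Σ_k γ_j^k(i) γ_a^k(i)`. -/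
def Saj {I : Type*} {p : ℕ} [Fintype I] (η : I → Type*) [∀ i, Fintype (η i)]
    (yj : ∀ i, η i → ℝ) (ya : ∀ i, η i → Fin p → ℝ) : Fin p → ℝ :=
  ∑ i, ∑ k, ctrR η yj i k • ctrV η ya i k

/-- The centred sum of squares `S_{j,j} = Σ_i Σ_k γ_j^k(i)²`. -/
def Sjj {I : Type*} [Fintype I] (η : I → Type*) [∀ i, Fintype (η i)]
    (yj : ∀ i, η i → ℝ) : ℝ :=
  ∑ i, ∑ k, (ctrR η yj i k) ^ 2

/-!
Within cell `i`, `y_j^k(i) - α(i) - βᵀ y_a^k(i)` is the centred residual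
`γ_j^k(i) - βᵀ γ_a^k(i)`, which sums to zero over the cell, plus the constant
`ȳ_j(i) - βᵀ ȳ_a(i) - α(i)`. Hence `SSE(α, β)` is the within-cell sum of squares plus
`Σ_i |η(i)| (ȳ_j(i) - βᵀ ȳ_a(i) - α(i))²`. The within-cell part is an ordinary least-squares
problem whose design matrix `X` has the centred covariates as rows, so `XᵀX = S_{a,a}` and
`Xᵀγ_j = S_{a,j}`; at the solution `β̂` of the normal equations it equals
`S_{j,j} - S_{j,a} β̂ + ‖X (β - β̂)‖²`. Both extra terms are nonnegative, and they vanish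
exactly when `β = β̂` (as `XᵀX` is invertible) and `α = α̂`.
-/

section LeastSquares

variable {κ n : Type*} [Fintype κ] [Fintype n] (X : Matrix κ n ℝ)

/-- At a solution `b` of the normal equations the residual `r - X b` is orthogonal to the
column space of `X`, so Pythagoras splits `‖r - X β‖²`. -/
lemma residual_sq_eq_of_normal_eq {r : κ → ℝ} {b : n → ℝ} (hb : (Xᵀ * X) *ᵥ b = Xᵀ *ᵥ r)
    (β : n → ℝ) :
    (r - X *ᵥ β) ⬝ᵥ (r - X *ᵥ β) =
      r ⬝ᵥ r - (Xᵀ *ᵥ r) ⬝ᵥ b + (X *ᵥ (β - b)) ⬝ᵥ (X *ᵥ (β - b)) := by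
  have horth : ∀ w, (r - X *ᵥ b) ⬝ᵥ (X *ᵥ w) = 0 := fun w => by
    rw [← dotProduct_transpose_mulVec, mulVec_sub, mulVec_mulVec, hb, sub_self, dotProduct_zero]
  have hres : (r - X *ᵥ b) ⬝ᵥ (r - X *ᵥ b) = r ⬝ᵥ r - (Xᵀ *ᵥ r) ⬝ᵥ b := by
    rw [dotProduct_sub (r - X *ᵥ b) r, horth, sub_zero, sub_dotProduct, dotProduct_comm (X *ᵥ b) r,
      ← dotProduct_transpose_mulVec, dotProduct_comm b]
  have huv := horth (β - b)
  rw [show r - X *ᵥ β = (r - X *ᵥ b) - X *ᵥ (β - b) by rw [mulVec_sub]; abel]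
  generalize r - X *ᵥ b = u at hres huv
  generalize X *ᵥ (β - b) = v at huv
  rw [sub_dotProduct, dotProduct_sub, dotProduct_sub, dotProduct_comm v u]
  linear_combination hres - 2 * huv

lemma mulVec_sub_dotProduct_self_eq_zero_iff [DecidableEq n] (hX : IsUnit (Xᵀ * X))
    {β b : n → ℝ} : (X *ᵥ (β - b)) ⬝ᵥ (X *ᵥ (β - b)) = 0 ↔ β = b := by
  refine ⟨fun h => ?_, fun h => by rw [h, sub_self, mulVec_zero, dotProduct_zero]⟩
  have hzero : (Xᵀ * X) *ᵥ (β - b) = (Xᵀ * X) *ᵥ 0 := by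
    rw [← mulVec_mulVec, dotProduct_self_eq_zero.mp h, mulVec_zero, mulVec_zero]
  exact sub_eq_zero.mp (mulVec_injective_iff_isUnit.mpr hX hzero)

end LeastSquares

lemma sum_sub_inv_card_smul_sum {ι 𝕜 M : Type*} [Fintype ι] [Nonempty ι] [DivisionRing 𝕜]
    [CharZero 𝕜] [AddCommGroup M] [Module 𝕜 M] (f : ι → M) :
    ∑ i, (f i - (Fintype.card ι : 𝕜)⁻¹ • ∑ j, f j) = 0 := by
  rw [Finset.sum_sub_distrib, Finset.sum_const, Finset.card_univ, ← Nat.cast_smul_eq_nsmul 𝕜,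
    smul_smul, mul_inv_cancel₀ (Nat.cast_ne_zero.mpr Fintype.card_ne_zero), one_smul, sub_self]

lemma sum_add_const_sq_of_sum_eq_zero {ι R : Type*} [Fintype ι] [CommSemiring R] {f : ι → R}
    (hf : ∑ i, f i = 0) (c : R) :
    ∑ i, (f i + c) ^ 2 = ∑ i, f i ^ 2 + Fintype.card ι * c ^ 2 := by
  simp_rw [add_sq, Finset.sum_add_distrib, ← Finset.sum_mul, ← Finset.mul_sum, hf]
  simp

lemma sum_mul_sq_eq_zero_iff_of_pos {ι : Type*} [Fintype ι] {w : ι → ℝ} (hw : ∀ i, 0 < w i)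
    (d : ι → ℝ) : ∑ i, w i * d i ^ 2 = 0 ↔ ∀ i, d i = 0 := by
  rw [Finset.sum_eq_zero_iff_of_nonneg fun i _ => by have := hw i; positivity]
  simp [(hw _).ne']

section Cells

variable {I : Type*} {p : ℕ} (η : I → Type*) [∀ i, Fintype (η i)]

def centredDesign (ya : ∀ i, η i → Fin p → ℝ) : Matrix (Σ i, η i) (Fin p) ℝ :=
  Matrix.of fun x => ctrV η ya x.1 x.2

def centredResponse (yj : ∀ i, η i → ℝ) : (Σ i, η i) → ℝ :=
  fun x => ctrR η yj x.1 x.2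

section Centring

variable [∀ i, Nonempty (η i)]

lemma sum_ctrR (yj : ∀ i, η i → ℝ) (i : I) : ∑ k, ctrR η yj i k = 0 := by
  simp only [ctrR, cellMeanR, div_eq_inv_mul, ← smul_eq_mul]
  exact sum_sub_inv_card_smul_sum (yj i)

lemma sum_ctrV (ya : ∀ i, η i → Fin p → ℝ) (i : I) : ∑ k, ctrV η ya i k = 0 :=
  sum_sub_inv_card_smul_sum (ya i)

end Centring

variable [Fintype I] (yj : ∀ i, η i → ℝ) (ya : ∀ i, η i → Fin p → ℝ)

lemma Saa_eq_transpose_mul_centredDesign :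
    Saa η ya = (centredDesign η ya)ᵀ * centredDesign η ya := by
  ext a b
  simp [Saa, centredDesign, Matrix.mul_apply, Matrix.sum_apply, vecMulVec_apply,
    Fintype.sum_sigma]

lemma Saj_eq_transpose_mulVec_centredResponse :
    Saj η yj ya = (centredDesign η ya)ᵀ *ᵥ centredResponse η yj := by
  ext a
  simp [Saj, centredDesign, centredResponse, mulVec, dotProduct, Finset.sum_apply,
    Fintype.sum_sigma, mul_comm]

lemma Sjj_eq_centredResponse_dotProduct_self :
    Sjj η yj = centredResponse η yj ⬝ᵥ centredResponse η yj := by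
  simp [Sjj, centredResponse, dotProduct, Fintype.sum_sigma, sq]

lemma sum_sum_sq_eq_residual (β : Fin p → ℝ) :
    ∑ i, ∑ k, (ctrR η yj i k - β ⬝ᵥ ctrV η ya i k) ^ 2 =
      (centredResponse η yj - centredDesign η ya *ᵥ β) ⬝ᵥ
        (centredResponse η yj - centredDesign η ya *ᵥ β) := by
  simp [centredDesign, centredResponse, mulVec, dotProduct, Fintype.sum_sigma, sq, mul_comm]

lemma SSE_eq_within_add_between [∀ i, Nonempty (η i)] (α : I → ℝ) (β : Fin p → ℝ) :
    SSE η yj ya α β = ∑ i, ∑ k, (ctrR η yj i k - β ⬝ᵥ ctrV η ya i k) ^ 2 +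
      ∑ i, (Fintype.card (η i) : ℝ) * (cellMeanR η yj i - β ⬝ᵥ cellMeanV η ya i - α i) ^ 2 := by
  rw [SSE, ← Finset.sum_add_distrib]
  refine Finset.sum_congr rfl fun i _ => ?_
  have hsplit : ∀ k, yj i k - α i - β ⬝ᵥ ya i k = (ctrR η yj i k - β ⬝ᵥ ctrV η ya i k) +
      (cellMeanR η yj i - β ⬝ᵥ cellMeanV η ya i - α i) := fun k => by
    simp only [ctrR, ctrV, dotProduct_sub]; ring
  simp_rw [hsplit]
  refine sum_add_const_sq_of_sum_eq_zero ?_ _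
  rw [Finset.sum_sub_distrib, ← dotProduct_sum, sum_ctrR, sum_ctrV, dotProduct_zero, sub_zero]

end Cells

theorem isLeast_SSE_general {I : Type*} {p : ℕ} [Fintype I]
    (η : I → Type*) [∀ i, Fintype (η i)] [∀ i, Nonempty (η i)]
    (yj : ∀ i, η i → ℝ) (ya : ∀ i, η i → Fin p → ℝ)
    (hS : IsUnit (Saa η ya)) :
    IsLeast (Set.range fun ab : (I → ℝ) × (Fin p → ℝ) => SSE η yj ya ab.1 ab.2)
      (Sjj η yj - Saj η yj ya ⬝ᵥ ((Saa η ya)⁻¹ *ᵥ Saj η yj ya)) ∧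
    ∀ (α : I → ℝ) (β : Fin p → ℝ),
      SSE η yj ya α β =
          Sjj η yj - Saj η yj ya ⬝ᵥ ((Saa η ya)⁻¹ *ᵥ Saj η yj ya) ↔
        β = (Saa η ya)⁻¹ *ᵥ Saj η yj ya ∧
        ∀ i, α i = cellMeanR η yj i - β ⬝ᵥ cellMeanV η ya i := by
  set X := centredDesign η ya
  set b := (Saa η ya)⁻¹ *ᵥ Saj η yj ya
  have hb : (Xᵀ * X) *ᵥ b = Xᵀ *ᵥ centredResponse η yj := by
    rw [← Saa_eq_transpose_mul_centredDesign, ← Saj_eq_transpose_mulVec_centredResponse,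
      mulVec_mulVec, mul_nonsing_inv _ ((isUnit_iff_isUnit_det _).mp hS), one_mulVec]
  set between : (I → ℝ) → (Fin p → ℝ) → ℝ := fun α β =>
    ∑ i, (Fintype.card (η i) : ℝ) * (cellMeanR η yj i - β ⬝ᵥ cellMeanV η ya i - α i) ^ 2
  have hSSE : ∀ α β, SSE η yj ya α β = (Sjj η yj - Saj η yj ya ⬝ᵥ b) +
      ((X *ᵥ (β - b)) ⬝ᵥ (X *ᵥ (β - b)) + between α β) := fun α β => by
    rw [SSE_eq_within_add_between, sum_sum_sq_eq_residual, residual_sq_eq_of_normal_eq X hb,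
      Sjj_eq_centredResponse_dotProduct_self, Saj_eq_transpose_mulVec_centredResponse,
      add_assoc]
  have hwithin : ∀ β, 0 ≤ (X *ᵥ (β - b)) ⬝ᵥ (X *ᵥ (β - b)) := fun β =>
    Finset.sum_nonneg fun _ _ => mul_self_nonneg _
  have hbetween : ∀ α β, 0 ≤ between α β := fun α β =>
    Finset.sum_nonneg fun _ _ => by positivity
  have hmin : ∀ α β, SSE η yj ya α β = Sjj η yj - Saj η yj ya ⬝ᵥ b ↔
      β = b ∧ ∀ i, α i = cellMeanR η yj i - β ⬝ᵥ cellMeanV η ya i := fun α β => by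
    rw [hSSE, add_eq_left, add_eq_zero_iff_of_nonneg (hwithin β) (hbetween α β),
      mulVec_sub_dotProduct_self_eq_zero_iff X (Saa_eq_transpose_mul_centredDesign η ya ▸ hS),
      sum_mul_sq_eq_zero_iff_of_pos fun _ => by positivity]
    simp only [sub_eq_zero, eq_comm]
  refine ⟨⟨⟨(fun i => cellMeanR η yj i - b ⬝ᵥ cellMeanV η ya i, b), ?_⟩, ?_⟩, hmin⟩
  · exact (hmin _ _).mpr ⟨rfl, fun _ => rfl⟩
  · rintro _ ⟨⟨α, β⟩, rfl⟩
    show _ ≤ SSE η yj ya α β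
    linarith [hSSE α β, hwithin β, hbetween α β]

/-- If `S_{a,a}` is invertible, the least value of `SSE(α, β)` over all
intercept functions `α` and slope vectors `β` is
`S_{j,j} − S_{j,a} S_{a,a}⁻¹ S_{a,j}`, attained exactly at
`β̂ = S_{a,a}⁻¹ S_{a,j}` and `α̂(i) = ȳ_j(i) − β̂ᵀ ȳ_a(i)`. -/
theorem isLeast_SSE {I : Type*} {p : ℕ} [Fintype I] [Nonempty I]
    (η : I → Type*) [∀ i, Fintype (η i)] [∀ i, Nonempty (η i)]
    (yj : ∀ i, η i → ℝ) (ya : ∀ i, η i → Fin p → ℝ)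
    (hS : IsUnit (Saa η ya)) :
    IsLeast (Set.range fun ab : (I → ℝ) × (Fin p → ℝ) => SSE η yj ya ab.1 ab.2)
      (Sjj η yj - Saj η yj ya ⬝ᵥ ((Saa η ya)⁻¹ *ᵥ Saj η yj ya)) ∧
    ∀ (α : I → ℝ) (β : Fin p → ℝ),
      SSE η yj ya α β =
          Sjj η yj - Saj η yj ya ⬝ᵥ ((Saa η ya)⁻¹ *ᵥ Saj η yj ya) ↔
        β = (Saa η ya)⁻¹ *ᵥ Saj η yj ya ∧
        ∀ i, α i = cellMeanR η yj i - β ⬝ᵥ cellMeanV η ya i :=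
  isLeast_SSE_general η yj ya hS

end
end
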